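/- Assume n ≥ 1 and M is invertible. Then the generalized eigenvalue problem Δ₁ z = λΔ₀ z is singular: det(Δ₁ − λΔ₀) = 0 for every λ ∈ ℂ. -/
import Mathlib

open Matrix
open scoped Kronecker

namespace ZGV6

variable {n : ℕ}

def Lt2 (L2 : Matrix (Fin n) (Fin n) ℂ) : Matrix (Fin n ⊕ Fin n) (Fin n ⊕ Fin n) ℂ :=
  Matrix.fromBlocks L2 0 0 L2

def Lt1 (L2 L1 : Matrix (Fin n) (Fin n) ℂ) : Matrix (Fin n ⊕ Fin n) (Fin n ⊕ Fin n) ℂ :=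
  Matrix.fromBlocks L1 0 ((2 : ℂ) • L2) L1

def Lt0 (L1 L0 : Matrix (Fin n) (Fin n) ℂ) : Matrix (Fin n ⊕ Fin n) (Fin n ⊕ Fin n) ℂ :=
  Matrix.fromBlocks L0 0 L1 L0

def Mt (M : Matrix (Fin n) (Fin n) ℂ) : Matrix (Fin n ⊕ Fin n) (Fin n ⊕ Fin n) ℂ :=
  Matrix.fromBlocks M 0 0 M

def C2 : Matrix (Fin 2) (Fin 2) ℂ := !![1, 0; 0, 0]
def C1 : Matrix (Fin 2) (Fin 2) ℂ := !![0, -1; -1, 0]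
def C0 : Matrix (Fin 2) (Fin 2) ℂ := !![0, 0; 0, 1]

def Δ0 (L2 L1 L0 M : Matrix (Fin n) (Fin n) ℂ) :
    Matrix ((Fin n × (Fin n ⊕ Fin n)) × Fin 2) ((Fin n × (Fin n ⊕ Fin n)) × Fin 2) ℂ :=
  L1 ⊗ₖ Mt M ⊗ₖ C2 + M ⊗ₖ Lt2 L2 ⊗ₖ C1 - M ⊗ₖ Lt1 L2 L1 ⊗ₖ C2 - L2 ⊗ₖ Mt M ⊗ₖ C1

def Δ1 (L2 L1 L0 M : Matrix (Fin n) (Fin n) ℂ) :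
    Matrix ((Fin n × (Fin n ⊕ Fin n)) × Fin 2) ((Fin n × (Fin n ⊕ Fin n)) × Fin 2) ℂ :=
  L2 ⊗ₖ Mt M ⊗ₖ C0 - L0 ⊗ₖ Mt M ⊗ₖ C2 - M ⊗ₖ Lt2 L2 ⊗ₖ C0 + M ⊗ₖ Lt0 L1 L0 ⊗ₖ C2

lemma kron_mulVec {α β α' β' : Type*} [Fintype α'] [Fintype β']
    (A : Matrix α α' ℂ) (B : Matrix β β' ℂ) (u : α' → ℂ) (v : β' → ℂ) :
    (A ⊗ₖ B) *ᵥ (fun p => u p.1 * v p.2) = fun p => (A *ᵥ u) p.1 * (B *ᵥ v) p.2 := by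
  funext p
  simp only [Matrix.mulVec, dotProduct, Matrix.kroneckerMap_apply, Fintype.sum_prod_type]
  rw [Fintype.sum_mul_sum]
  exact Finset.sum_congr rfl fun i _ => Finset.sum_congr rfl fun j _ => by ring

/-- If `n ≥ 1` and `M` is invertible, then the pencil `Δ₁ − λΔ₀` is singular:
`det(Δ₁ − λΔ₀) = 0` for every `λ ∈ ℂ`. -/
theorem pencil_is_singular
    (n : ℕ) (hn : 1 ≤ n) (L2 L1 L0 M : Matrix (Fin n) (Fin n) ℂ)
    (hM : IsUnit M) :
    ∀ lam : ℂ, (Δ1 L2 L1 L0 M - lam • Δ0 L2 L1 L0 M).det = 0 := by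
  intro lam
  haveI : Nonempty (Fin n) := ⟨⟨0, hn⟩⟩
  -- eigenvector of M⁻¹ * L2
  obtain ⟨c, hc⟩ :=
    Module.End.exists_eigenvalue ((M⁻¹ * L2).mulVecLin : Module.End ℂ (Fin n → ℂ))
  obtain ⟨x, hx⟩ := hc.exists_hasEigenvector
  have hxne : x ≠ 0 := hx.right
  have heig : (M⁻¹ * L2) *ᵥ x = c • x := hx.apply_eq_smul
  have hdet : IsUnit M.det := (Matrix.isUnit_iff_isUnit_det M).mp hM
  have hL2x : L2 *ᵥ x = c • (M *ᵥ x) := by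
    have h1 : M *ᵥ ((M⁻¹ * L2) *ᵥ x) = L2 *ᵥ x := by
      rw [Matrix.mulVec_mulVec, ← Matrix.mul_assoc, Matrix.mul_nonsing_inv M hdet,
        Matrix.one_mul]
    rw [← h1, heig, Matrix.mulVec_smul]
  set y := M *ᵥ x with hy
  -- the kernel vector
  set vv : (Fin n ⊕ Fin n) → ℂ := Sum.elim (0 : Fin n → ℂ) x with hvv
  set w : Fin n × (Fin n ⊕ Fin n) → ℂ := fun q => x q.1 * vv q.2 with hw
  set e : Fin 2 → ℂ := ![0, 1] with he
  set z : (Fin n × (Fin n ⊕ Fin n)) × Fin 2 → ℂ := fun p => w p.1 * e p.2 with hz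
  have hA : ∀ (A : Matrix (Fin n) (Fin n) ℂ) (B : Matrix (Fin n ⊕ Fin n) (Fin n ⊕ Fin n) ℂ)
      (C : Matrix (Fin 2) (Fin 2) ℂ) (p : (Fin n × (Fin n ⊕ Fin n)) × Fin 2),
      ((A ⊗ₖ B ⊗ₖ C) *ᵥ z) p = (A *ᵥ x) p.1.1 * (B *ᵥ vv) p.1.2 * (C *ᵥ e) p.2 := by
    intro A B C p
    have h1 := congrFun (kron_mulVec (A ⊗ₖ B) C w e) p
    have h2 := congrFun (kron_mulVec A B x vv) p.1
    rw [hz, h1, hw, h2]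
  -- block mulVec computations
  have hMt : Mt M *ᵥ vv = Sum.elim (0 : Fin n → ℂ) y := by
    rw [hvv, Mt, Matrix.fromBlocks_mulVec]
    simp [hy]
  have hLt2 : Lt2 L2 *ᵥ vv = Sum.elim (0 : Fin n → ℂ) (L2 *ᵥ x) := by
    rw [hvv, Lt2, Matrix.fromBlocks_mulVec]
    simp
  have hLt1 : Lt1 L2 L1 *ᵥ vv = Sum.elim (0 : Fin n → ℂ) (L1 *ᵥ x) := by
    rw [hvv, Lt1, Matrix.fromBlocks_mulVec]
    simp
  have hLt0 : Lt0 L1 L0 *ᵥ vv = Sum.elim (0 : Fin n → ℂ) (L0 *ᵥ x) := by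
    rw [hvv, Lt0, Matrix.fromBlocks_mulVec]
    simp
  have hC2 : C2 *ᵥ e = 0 := by
    funext k
    fin_cases k <;> simp [C2, he, Matrix.mulVec, dotProduct, Fin.sum_univ_succ]
  rw [← Matrix.exists_mulVec_eq_zero_iff]
  refine ⟨z, ?_, ?_⟩
  · -- z ≠ 0
    obtain ⟨i0, hi0⟩ : ∃ i, x i ≠ 0 := by
      by_contra h
      push_neg at h
      exact hxne (funext h)
    intro h
    have h0 := congrFun h ((i0, Sum.inr i0), 1)
    rw [hz] at h0
    simp [hw, hvv, he] at h0
    exact hi0 h0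
  · -- (Δ1 - lam • Δ0) *ᵥ z = 0
    funext p
    obtain ⟨⟨i, a⟩, k⟩ := p
    simp only [Matrix.sub_mulVec, Matrix.smul_mulVec, Δ1, Δ0, Matrix.add_mulVec,
      Pi.sub_apply, Pi.add_apply, Pi.smul_apply, Pi.zero_apply, smul_eq_mul]
    rw [hA, hA, hA, hA, hA, hA, hA, hA, hMt, hLt2, hLt1, hLt0, hC2, hL2x]
    rcases a with j | j <;>
      simp only [Sum.elim_inl, Sum.elim_inr, Pi.zero_apply, Pi.smul_apply, smul_eq_mul] <;>
      ring

end ZGV6
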